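/- Let (V_{i,j}) be a point of R_{2n}, i.e. a collection of subspaces of W indexed by pairs (i,j) with 1 ≤ i ≤ j ≤ 2n−1, satisfying dim V_{i,j} = i, V_{i,j} ⊆ W_{i,j}, V_{i,j} ⊆ V_{i+1,j} whenever i+1 ≤ j, and pr_{j+1}(V_{i,j}) ⊆ V_{i,j+1} whenever j+1 ≤ 2n−1 (with W_{i,j} = span(w_1,…,w_i,w_{j+1},…,w_{2n})). Define (σV)_{i,j} = V_{2n−j,2n−i}^⊥ ∩ W_{i,j}, where U^⊥ is the orthogonal complement with respect to the symplectic form. Then dim((σV)_{i,j}) = i for all (i,j), the collection σV is again a point of R_{2n}, and σ(σV) = V. -/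

import Mathlib

noncomputable section

/-- The ambient 2n-dimensional complex vector space `W = ℂ^{2n}`. -/
abbrev Wsp (n : ℕ) := Fin (2*n) → ℂ

/-- The basis vector `w_k` (1-based index `k ∈ {1,…,2n}`). -/
def wvec (n k : ℕ) : Wsp n := fun i => if (i : ℕ) + 1 = k then 1 else 0

/-- The standard symplectic form: `⟨w_i, w_{2n+1-i}⟩ = 1` for `1 ≤ i ≤ n`,
and `⟨w_i, w_j⟩ = 0` for `j ≠ 2n+1-i`. -/
def sform (n : ℕ) (x y : Wsp n) : ℂ :=
  ∑ i : Fin (2*n), (if (i : ℕ) < n then 1 else -1) * x i *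
    y ⟨2*n - 1 - (i : ℕ), by have := i.isLt; omega⟩

/-- A subspace is isotropic if the symplectic form vanishes on it. -/
def IsIsotropic (n : ℕ) (U : Submodule ℂ (Wsp n)) : Prop :=
  ∀ u ∈ U, ∀ v ∈ U, sform n u v = 0

/-- The projection `pr_k` along `w_k` (1-based). -/
def prj (n k : ℕ) : Wsp n →ₗ[ℂ] Wsp n where
  toFun x := fun i => if (i : ℕ) + 1 = k then 0 else x i
  map_add' x y := by funext i; by_cases h : (i : ℕ) + 1 = k <;> simp [h]
  map_smul' c x := by funext i; by_cases h : (i : ℕ) + 1 = k <;> simp [h]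

/-- The subspace `W_{i,j} = span(w_1,…,w_i,w_{j+1},…,w_{2n})` (1-based). -/
def WIJ (n i j : ℕ) : Submodule ℂ (Wsp n) :=
  Submodule.span ℂ (wvec n '' {k | (1 ≤ k ∧ k ≤ i) ∨ (j + 1 ≤ k ∧ k ≤ 2*n)})

/-- Orthogonal complement with respect to the symplectic form. -/
def sperp (n : ℕ) (U : Submodule ℂ (Wsp n)) : Submodule ℂ (Wsp n) where
  carrier := {x | ∀ u ∈ U, sform n x u = 0}
  zero_mem' := by intro u hu; simp [sform]
  add_mem' := by
    intro a b ha hb u hu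
    have ha' := ha u hu
    have hb' := hb u hu
    simp only [sform, Pi.add_apply, add_mul, mul_add, Finset.sum_add_distrib] at *
    rw [ha', hb', add_zero]
  smul_mem' := by
    intro c a ha u hu
    have ha' := ha u hu
    simp only [sform, Pi.smul_apply, smul_eq_mul] at *
    calc ∑ i : Fin (2*n), (if (i : ℕ) < n then 1 else -1) * (c * a i) *
          u ⟨2*n - 1 - (i : ℕ), by have := i.isLt; omega⟩
        = c * ∑ i : Fin (2*n), (if (i : ℕ) < n then 1 else -1) * a i *
          u ⟨2*n - 1 - (i : ℕ), by have := i.isLt; omega⟩ := by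
          rw [Finset.mul_sum]; congr 1; funext i; ring
      _ = 0 := by rw [ha', mul_zero]

/-- The points of the Bott–Samelson type resolution `SpR_{2n}`:
collections `(V_{i,j})` for `1 ≤ i ≤ j`, `i+j ≤ 2n`. -/
structure IsSpR (n : ℕ) (V : ℕ → ℕ → Submodule ℂ (Wsp n)) : Prop where
  dim : ∀ i j, 1 ≤ i → i ≤ j → i + j ≤ 2*n → Module.finrank ℂ (V i j) = i
  sub : ∀ i j, 1 ≤ i → i ≤ j → i + j ≤ 2*n → V i j ≤ WIJ n i j
  mono : ∀ i j, 1 ≤ i → i + 1 ≤ j → (i + 1) + j ≤ 2*n → V i j ≤ V (i+1) j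
  proj : ∀ i j, 1 ≤ i → i ≤ j → i + (j+1) ≤ 2*n →
    Submodule.map (prj n (j+1)) (V i j) ≤ V i (j+1)
  isot : ∀ i, 1 ≤ i → i ≤ n → IsIsotropic n (V i (2*n - i))

/-- A point of `SpR_{2n}` lies in the divisor `Z_{i,j}` if
`V_{i,j} = V_{i-1,j+1} + ℂ w_{j+1}` (with `V_0 = 0`). -/
def InZ (n : ℕ) (V : ℕ → ℕ → Submodule ℂ (Wsp n)) (i j : ℕ) : Prop :=
  V i j = (if i = 1 then ⊥ else V (i-1) (j+1)) ⊔ Submodule.span ℂ {wvec n (j+1)}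

/-- The points of the `SL_{2n}` resolution `R_{2n}`: collections `(V_{i,j})`
for `1 ≤ i ≤ j ≤ 2n-1`. -/
structure IsR (n : ℕ) (V : ℕ → ℕ → Submodule ℂ (Wsp n)) : Prop where
  dim : ∀ i j, 1 ≤ i → i ≤ j → j ≤ 2*n - 1 → Module.finrank ℂ (V i j) = i
  sub : ∀ i j, 1 ≤ i → i ≤ j → j ≤ 2*n - 1 → V i j ≤ WIJ n i j
  mono : ∀ i j, 1 ≤ i → i + 1 ≤ j → j ≤ 2*n - 1 → V i j ≤ V (i+1) j
  proj : ∀ i j, 1 ≤ i → i ≤ j → j + 1 ≤ 2*n - 1 →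
    Submodule.map (prj n (j+1)) (V i j) ≤ V i (j+1)

/-!
The symplectic form is alternating and nondegenerate, so `U ↦ U^⊥` is an inclusion-reversing
involution with `dim U^⊥ = 2n - dim U`. Moreover `W_{i,j}^⊥` is spanned by the `w_k` with
`2n - j < k ≤ 2n - i`, so it meets `W_{2n-j,2n-i}` only in `0`. For `U = V_{2n-j,2n-i}`, which
lies in `W_{2n-j,2n-i}`, this gives `U^⊥ + W_{i,j} = W`, and counting dimensions
(`j + (i + 2n - j) - 2n`) yields `dim (σV)_{i,j} = i`. Since `⟨x, pr_k v⟩` differs from `⟨x, v⟩`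
only by a multiple of the `w_{2n+1-k}`-coordinate of `x`, the inclusion and projection conditions
of `σV` follow from the projection and inclusion conditions of `V`, respectively. Finally
`V_{i,j} ⊆ V_{i,j}^⊥⊥` and `V_{i,j} ⊆ W_{i,j}` give `V_{i,j} ⊆ (σσV)_{i,j}`, and both sides have dimension `i`.
-/

open Module

def sformSign (n : ℕ) (i : Fin (2*n)) : ℂ := if (i : ℕ) < n then 1 else -1

section SymplecticForm

variable {n : ℕ}

lemma sformSign_ne_zero (i : Fin (2*n)) : sformSign n i ≠ 0 := by
  unfold sformSign; split_ifs <;> norm_num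

lemma sformSign_rev (i : Fin (2*n)) : sformSign n i.rev = -sformSign n i := by
  have := i.isLt
  unfold sformSign
  split_ifs <;> simp_all [Fin.val_rev] <;> omega

lemma sform_eq_sum (x y : Wsp n) : sform n x y = ∑ i, sformSign n i * x i * y i.rev := by
  refine Finset.sum_congr rfl fun i _ => ?_
  congr 2
  ext
  simp only [Fin.val_rev]
  omega

lemma sform_antisymm (x y : Wsp n) : sform n y x = -sform n x y := by
  rw [sform_eq_sum, sform_eq_sum, ← Finset.sum_neg_distrib,
    ← Equiv.sum_comp Fin.revPerm]
  refine Finset.sum_congr rfl fun i _ => ?_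
  simp only [Fin.revPerm_apply, Fin.rev_rev, sformSign_rev]
  ring

lemma sform_single_right (x : Wsp n) (k : Fin (2*n)) :
    sform n x (Pi.single k 1) = sformSign n k.rev * x k.rev := by
  rw [sform_eq_sum, Finset.sum_eq_single k.rev]
  · simp
  · intro i _ hi
    rw [Pi.single_eq_of_ne (fun h => hi (by rw [← h, Fin.rev_rev])), mul_zero]
  · simp

lemma sform_prj_right {x : Wsp n} {m : ℕ} (hx : ∀ k : Fin (2*n), (k : ℕ) + m = 2*n → x k = 0)
    (v : Wsp n) : sform n x (prj n m v) = sform n x v := by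
  rw [sform_eq_sum, sform_eq_sum]
  refine Finset.sum_congr rfl fun i _ => ?_
  by_cases h : (i.rev : ℕ) + 1 = m
  · rw [hx i (by have := i.isLt; simp only [Fin.val_rev] at h; omega)]
    ring
  · simp only [prj, LinearMap.coe_mk, AddHom.coe_mk, if_neg h]

lemma sform_prj_left {v : Wsp n} {m : ℕ} (hv : ∀ k : Fin (2*n), (k : ℕ) + m = 2*n → v k = 0)
    (x : Wsp n) : sform n (prj n m x) v = sform n x v := by
  rw [sform_antisymm, sform_prj_right hv, ← sform_antisymm]

def sformBilin (n : ℕ) : LinearMap.BilinForm ℂ (Wsp n) :=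
  LinearMap.mk₂ ℂ (sform n)
    (fun x x' y => by
      simp only [sform_eq_sum, Pi.add_apply, ← Finset.sum_add_distrib]
      exact Finset.sum_congr rfl fun i _ => by ring)
    (fun c x y => by
      simp only [sform_eq_sum, Pi.smul_apply, smul_eq_mul, Finset.mul_sum]
      exact Finset.sum_congr rfl fun i _ => by ring)
    (fun x y y' => by
      simp only [sform_eq_sum, Pi.add_apply, ← Finset.sum_add_distrib]
      exact Finset.sum_congr rfl fun i _ => by ring)
    (fun c x y => by
      simp only [sform_eq_sum, Pi.smul_apply, smul_eq_mul, Finset.mul_sum]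
      exact Finset.sum_congr rfl fun i _ => by ring)

lemma sformBilin_isRefl : (sformBilin n).IsRefl := fun x y h => by
  change sform n y x = 0
  rw [sform_antisymm, show sform n x y = 0 from h, neg_zero]

lemma sformBilin_nondegenerate : (sformBilin n).Nondegenerate := by
  refine (LinearMap.IsRefl.nondegenerate_iff_separatingLeft sformBilin_isRefl).mpr fun x hx => ?_
  funext m
  have h : sform n x (Pi.single m.rev 1) = 0 := hx _
  rw [sform_single_right, Fin.rev_rev] at h
  exact (mul_eq_zero.mp h).resolve_left (sformSign_ne_zero m)

lemma sperp_eq_orthogonal (U : Submodule ℂ (Wsp n)) :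
    sperp n U = (sformBilin n).orthogonal U := by
  ext x
  refine forall₂_congr fun u _ => ?_
  change sform n x u = 0 ↔ sform n u x = 0
  rw [sform_antisymm x u, neg_eq_zero]

lemma sperp_antitone : Antitone (sperp n) := fun U U' h => by
  simpa only [sperp_eq_orthogonal] using LinearMap.BilinForm.orthogonal_le h

lemma sperp_sperp (U : Submodule ℂ (Wsp n)) : sperp n (sperp n U) = U := by
  rw [sperp_eq_orthogonal, sperp_eq_orthogonal, LinearMap.BilinForm.orthogonal_orthogonal
    sformBilin_nondegenerate sformBilin_isRefl]

lemma finrank_sperp (U : Submodule ℂ (Wsp n)) :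
    finrank ℂ (sperp n U) = 2*n - finrank ℂ U := by
  rw [sperp_eq_orthogonal, LinearMap.BilinForm.finrank_orthogonal sformBilin_nondegenerate,
    finrank_fin_fun]

lemma sperp_bot : sperp n ⊥ = ⊤ := by
  rw [sperp_eq_orthogonal, LinearMap.BilinForm.orthogonal_bot]

end SymplecticForm

section CoordinateSubspaces

variable {n i j : ℕ}

lemma wvec_succ (k : Fin (2*n)) : wvec n (k + 1) = Pi.single k 1 := by
  funext m
  simp [wvec, Pi.single_apply, Fin.ext_iff]

lemma mem_WIJ {x : Wsp n} : x ∈ WIJ n i j ↔ ∀ k : Fin (2*n), i ≤ k → k < j → x k = 0 := by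
  constructor
  · intro hx k hik hkj
    induction hx using Submodule.span_induction with
    | mem _ hy =>
      obtain ⟨m, hm, rfl⟩ := hy
      simp only [wvec, ite_eq_right_iff, one_ne_zero, imp_false]
      simp only [Set.mem_ofPred_eq] at hm
      omega
    | zero => rfl
    | add _ _ _ _ hy hz => simp [hy, hz]
    | smul _ _ _ hy => simp [hy]
  · intro hx
    rw [pi_eq_sum_univ' x]
    refine Submodule.sum_mem _ fun k _ => ?_
    by_cases hk : i ≤ k ∧ k < j
    · simp [hx k hk.1 hk.2]
    · refine Submodule.smul_mem _ _ (Submodule.subset_span ⟨k + 1, ?_, wvec_succ k⟩)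
      simp only [Set.mem_ofPred_eq]
      omega

lemma single_mem_WIJ {k : Fin (2*n)} (hk : k < i ∨ j ≤ k) : Pi.single k 1 ∈ WIJ n i j :=
  mem_WIJ.mpr fun m him hmj => Pi.single_eq_of_ne (by rintro rfl; omega) _

lemma finrank_WIJ (hij : i ≤ j) (hj : j ≤ 2*n) : finrank ℂ (WIJ n i j) = i + (2*n - j) := by
  let S := {k : Fin (2*n) // i ≤ k ∧ k < j}
  let restrict : Wsp n →ₗ[ℂ] S → ℂ := LinearMap.funLeft ℂ ℂ Subtype.val
  have hker : LinearMap.ker restrict = WIJ n i j := by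
    ext x
    simp [restrict, mem_WIJ, funext_iff, LinearMap.funLeft, S]
  have hrange : LinearMap.range restrict = ⊤ := LinearMap.range_eq_top.mpr
    (LinearMap.funLeft_surjective_of_injective _ _ _ Subtype.val_injective)
  have hS : Fintype.card S = j - i := by
    have hIco : Finset.univ.filter (fun k : Fin (2*n) => i ≤ k ∧ k < j) =
        (Finset.Ico i j).attachFin (fun m hm => by rw [Finset.mem_Ico] at hm; omega) := by
      ext k
      simp
    rw [Fintype.card_subtype, hIco, Finset.card_attachFin, Nat.card_Ico]
  have hdim := LinearMap.finrank_range_add_finrank_ker restrict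
  rw [hker, hrange, finrank_top, finrank_fin_fun, finrank_fintype_fun_eq_card, hS] at hdim
  omega

lemma map_prj_WIJ_le : (WIJ n i j).map (prj n (j + 1)) ≤ WIJ n i (j + 1) := by
  rintro _ ⟨x, hx, rfl⟩
  rw [SetLike.mem_coe, mem_WIJ] at hx
  rw [mem_WIJ]
  intro k hik hkj
  by_cases hk : (k : ℕ) + 1 = j + 1
  · simp only [prj, LinearMap.coe_mk, AddHom.coe_mk, if_pos hk]
  · simp only [prj, LinearMap.coe_mk, AddHom.coe_mk, if_neg hk]
    exact hx k hik (by omega)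

lemma disjoint_WIJ_sperp_WIJ : Disjoint (WIJ n (2*n - j) (2*n - i)) (sperp n (WIJ n i j)) := by
  rw [Submodule.disjoint_def]
  intro x hx hx'
  funext k
  by_cases hk : 2*n - j ≤ k ∧ k < 2*n - i
  · exact mem_WIJ.mp hx k hk.1 hk.2
  · have h := hx' _ (single_mem_WIJ (k := k.rev) (by simp only [Fin.val_rev]; omega))
    rw [sform_single_right, Fin.rev_rev] at h
    exact (mul_eq_zero.mp h).resolve_left (sformSign_ne_zero k)

end CoordinateSubspaces

lemma finrank_sperp_inf_WIJ {n i j : ℕ} {U : Submodule ℂ (Wsp n)} (hij : i ≤ j) (hj : j ≤ 2*n)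
    (hU : finrank ℂ U = 2*n - j) (hUW : U ≤ WIJ n (2*n - j) (2*n - i)) :
    finrank ℂ (sperp n U ⊓ WIJ n i j : Submodule ℂ (Wsp n)) = i := by
  have hperp : sperp n (sperp n U ⊔ WIJ n i j) = ⊥ := by
    refine eq_bot_iff.mpr ?_
    calc sperp n (sperp n U ⊔ WIJ n i j)
        ≤ sperp n (sperp n U) ⊓ sperp n (WIJ n i j) :=
          le_inf (sperp_antitone le_sup_left) (sperp_antitone le_sup_right)
      _ ≤ WIJ n (2*n - j) (2*n - i) ⊓ sperp n (WIJ n i j) := by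
          rw [sperp_sperp]
          exact inf_le_inf_right _ hUW
      _ = ⊥ := disjoint_WIJ_sperp_WIJ.eq_bot
  have hsup : sperp n U ⊔ WIJ n i j = ⊤ := by
    rw [← sperp_sperp (sperp n U ⊔ WIJ n i j), hperp, sperp_bot]
  have hdim := Submodule.finrank_sup_add_finrank_inf_eq (sperp n U) (WIJ n i j)
  rw [hsup, finrank_top, finrank_fin_fun, finrank_sperp, hU, finrank_WIJ hij hj] at hdim
  omega

/-- The involution `σ`. -/
def symplecticDual (n : ℕ) (V : ℕ → ℕ → Submodule ℂ (Wsp n)) (i j : ℕ) :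
    Submodule ℂ (Wsp n) :=
  sperp n (V (2*n - j) (2*n - i)) ⊓ WIJ n i j

namespace IsR

variable {n : ℕ} {V : ℕ → ℕ → Submodule ℂ (Wsp n)}

lemma finrank_symplecticDual (hV : IsR n V) {i j : ℕ} (hi : 1 ≤ i) (hij : i ≤ j)
    (hj : j ≤ 2*n - 1) : finrank ℂ (symplecticDual n V i j) = i :=
  finrank_sperp_inf_WIJ hij (by omega) (hV.dim _ _ (by omega) (by omega) (by omega))
    (hV.sub _ _ (by omega) (by omega) (by omega))

lemma symplecticDual_mono (hV : IsR n V) {i j : ℕ} (hi : 1 ≤ i) (hij : i + 1 ≤ j)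
    (hj : j ≤ 2*n - 1) : symplecticDual n V i j ≤ symplecticDual n V (i + 1) j := by
  rintro x ⟨hxV, hxW⟩
  rw [SetLike.mem_coe, mem_WIJ] at hxW
  refine ⟨fun v hv => ?_, mem_WIJ.mpr fun k hik hkj => hxW k (by omega) hkj⟩
  have hproj := hV.proj (2*n - j) (2*n - (i + 1)) (by omega) (by omega) (by omega)
  rw [show 2*n - (i + 1) + 1 = 2*n - i by omega] at hproj
  -- `pr_{2n-i}` only changes the coordinate paired with `x_{i+1}`, which is `0` as `x ∈ W_{i,j}`.
  rw [← sform_prj_right (m := 2*n - i) (fun k hk => hxW k (by omega) (by omega))]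
  exact hxV _ (hproj ⟨v, hv, rfl⟩)

lemma symplecticDual_proj (hV : IsR n V) {i j : ℕ} (hi : 1 ≤ i) (hij : i ≤ j)
    (hj : j + 1 ≤ 2*n - 1) :
    (symplecticDual n V i j).map (prj n (j + 1)) ≤ symplecticDual n V i (j + 1) := by
  rintro _ ⟨x, ⟨hxV, hxW⟩, rfl⟩
  refine ⟨fun v hv => ?_, map_prj_WIJ_le ⟨x, hxW, rfl⟩⟩
  have hmono := hV.mono (2*n - (j + 1)) (2*n - i) (by omega) (by omega) (by omega)
  rw [show 2*n - (j + 1) + 1 = 2*n - j by omega] at hmono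
  have hvW := mem_WIJ.mp (hV.sub _ _ (by omega) (by omega) (by omega) hv)
  rw [sform_prj_left (fun k hk => hvW k (by omega) (by omega))]
  exact hxV v (hmono hv)

theorem symplecticDual_isR (hV : IsR n V) : IsR n (symplecticDual n V) :=
  ⟨fun _ _ => hV.finrank_symplecticDual, fun _ _ _ _ _ => inf_le_right,
    fun _ _ => hV.symplecticDual_mono, fun _ _ => hV.symplecticDual_proj⟩

theorem symplecticDual_symplecticDual (hV : IsR n V) {i j : ℕ} (hi : 1 ≤ i) (hij : i ≤ j)
    (hj : j ≤ 2*n - 1) : symplecticDual n (symplecticDual n V) i j = V i j := by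
  have hle : V i j ≤ symplecticDual n (symplecticDual n V) i j := by
    refine le_inf ?_ (hV.sub i j hi hij hj)
    rw [symplecticDual, show 2*n - (2*n - i) = i by omega, show 2*n - (2*n - j) = j by omega]
    exact (sperp_sperp (V i j)).ge.trans (sperp_antitone inf_le_left)
  refine (Submodule.eq_of_le_of_finrank_le hle ?_).symm
  rw [hV.symplecticDual_isR.finrank_symplecticDual hi hij hj, hV.dim i j hi hij hj]

end IsR

theorem statement8_general (n : ℕ)
    (V : ℕ → ℕ → Submodule ℂ (Wsp n)) (hV : IsR n V) :
    (∀ i j, 1 ≤ i → i ≤ j → j ≤ 2*n - 1 →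
      Module.finrank ℂ (sperp n (V (2*n - j) (2*n - i)) ⊓ WIJ n i j : Submodule ℂ (Wsp n)) = i) ∧
    IsR n (fun i j => sperp n (V (2*n - j) (2*n - i)) ⊓ WIJ n i j) ∧
    (∀ i j, 1 ≤ i → i ≤ j → j ≤ 2*n - 1 →
      sperp n (sperp n (V (2*n - (2*n - i)) (2*n - (2*n - j))) ⊓ WIJ n (2*n - j) (2*n - i))
        ⊓ WIJ n i j = V i j) :=
  ⟨fun _ _ => hV.finrank_symplecticDual, hV.symplecticDual_isR,
    fun _ _ => hV.symplecticDual_symplecticDual⟩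

theorem statement8 (n : ℕ) (hn : 1 ≤ n)
    (V : ℕ → ℕ → Submodule ℂ (Wsp n)) (hV : IsR n V) :
    (∀ i j, 1 ≤ i → i ≤ j → j ≤ 2*n - 1 →
      Module.finrank ℂ (sperp n (V (2*n - j) (2*n - i)) ⊓ WIJ n i j : Submodule ℂ (Wsp n)) = i) ∧
    IsR n (fun i j => sperp n (V (2*n - j) (2*n - i)) ⊓ WIJ n i j) ∧
    (∀ i j, 1 ≤ i → i ≤ j → j ≤ 2*n - 1 →
      sperp n (sperp n (V (2*n - (2*n - i)) (2*n - (2*n - j))) ⊓ WIJ n (2*n - j) (2*n - i))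
        ⊓ WIJ n i j = V i j) :=
  statement8_general n V hV
end
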